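/- arXiv:2603.15495 — 4 statements merged into one kernel-verified Lean document; each statement's English description precedes it below -/
import Mathlib

section
/- Let Π_1,…,Π_m be orthogonal projections on ℂ^N with d_i := Tr(Π_i) ≥ 1, let ψ be a density matrix, and let (w_s, φ(s))_{s∈S} be a finitely supported random tuple of rank-one states in the ranges of the Π_i satisfying the first-moment, 2-design second-moment, and pairwise-independence assumptions. Then the expected variance of the altered Hamiltonians satisfies Σ_{s∈S} w_s · Var_ψ(H_{φ(s)}) ≥ Var_ψ( Σ_{i=1}^m (1 + 1/d_i) Π_i ) + Σ_{i=1}^m ((d_i − 1)/(d_i (d_i + 1))) · Tr(Π_i ψ). -/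
/-!
The covariance `Cov_ψ(A, B) = Tr(ABψ) - Tr(Aψ) Tr(Bψ)` is bilinear, and it equals
`Tr((A ⊗ B) K_ψ)` for a fixed kernel `K_ψ`, so its expectation over a random pair only sees the
second moment `E[A ⊗ B]`. For Hermitian observables this gives the law of total variance and the
additivity of variance over pairwise uncorrelated summands. By the first moments
`E H_φ = Σ (1 + 1/d_i) Π_i`, and by pairwise independence the fluctuations `φ_i - Π_i/d_i` are
pairwise uncorrelated, so the expected variance is `Var_ψ(E H_φ)` plus a sum of single-site terms
`E Var_ψ(φ_i - Π_i/d_i) = E Var_ψ(φ_i) - Var_ψ(Π_i/d_i)`. With `τ = Tr(Πψ)` and `ρ = Tr(ΠψΠψ)`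
the 2-design moments evaluate such a term to `τ/d - (τ² + ρ)/(d(d+1)) - (τ - τ²)/d²`, which
exceeds `(d-1)τ/(d(d+1))` by `((d-1)τ(1-τ) + d(τ² - ρ))/(d²(d+1))`. This is nonnegative because
`0 ≤ τ ≤ 1` and `ρ = Tr(M²) ≤ (Tr M)² = τ²` for the positive matrix `M = ΠψΠ`.
-/

open Matrix Kronecker
open scoped ComplexOrder

/-- The variance `Var_ψ(G) = Tr(G²ψ) − (Tr(Gψ))²` of a (Hermitian) observable `G`
in the (density-matrix) state `ψ`, as a real number. -/
noncomputable def matVar {N : ℕ} (ψ G : Matrix (Fin N) (Fin N) ℂ) : ℝ :=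
  ((G * G * ψ).trace).re - (((G * ψ).trace).re) ^ 2

/-- The swap matrix `S_N` on `ℂ^N ⊗ ℂ^N`, with entries
`(S_N)_{(i,j),(k,l)} = 1` iff `i = l` and `j = k`. -/
noncomputable def swapMat (N : ℕ) : Matrix (Fin N × Fin N) (Fin N × Fin N) ℂ :=
  Matrix.of fun p q => if p.1 = q.2 ∧ p.2 = q.1 then 1 else 0

namespace Matrix

section Kronecker

variable {S α l m p q : Type*} [Fintype S] [CommRing α]

theorem sum_smul_kronecker (w : S → α) (F : S → Matrix l m α) (B : Matrix p q α) :
    ∑ s, w s • (F s ⊗ₖ B) = (∑ s, w s • F s) ⊗ₖ B := by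
  ext ⟨i, j⟩ ⟨k, r⟩
  simp [Matrix.sum_apply, Finset.sum_mul, mul_assoc]

theorem kronecker_sum_smul (w : S → α) (A : Matrix l m α) (G : S → Matrix p q α) :
    ∑ s, w s • (A ⊗ₖ G s) = A ⊗ₖ (∑ s, w s • G s) := by
  ext ⟨i, j⟩ ⟨k, r⟩
  simp [Matrix.sum_apply, Finset.mul_sum, mul_left_comm]

theorem sub_kronecker (A₁ A₂ : Matrix l m α) (B : Matrix p q α) :
    (A₁ - A₂) ⊗ₖ B = A₁ ⊗ₖ B - A₂ ⊗ₖ B := by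
  rw [eq_sub_iff_add_eq, ← add_kronecker, sub_add_cancel]

theorem kronecker_sub (A : Matrix l m α) (B₁ B₂ : Matrix p q α) :
    A ⊗ₖ (B₁ - B₂) = A ⊗ₖ B₁ - A ⊗ₖ B₂ := by
  rw [eq_sub_iff_add_eq, ← kronecker_add, sub_add_cancel]

theorem sum_smul_sub_kronecker_sub_eq_zero {w : S → α} (hw : ∑ s, w s = 1)
    {F : S → Matrix l m α} {G : S → Matrix p q α} {A : Matrix l m α} {B : Matrix p q α}
    (hF : ∑ s, w s • F s = A) (hG : ∑ s, w s • G s = B)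
    (hFG : ∑ s, w s • (F s ⊗ₖ G s) = A ⊗ₖ B) :
    ∑ s, w s • ((F s - A) ⊗ₖ (G s - B)) = 0 := by
  simp only [sub_kronecker, kronecker_sub, smul_sub, Finset.sum_sub_distrib, hFG,
    sum_smul_kronecker, kronecker_sum_smul, hF, hG, ← Finset.sum_smul, hw, one_smul, sub_self]

end Kronecker

section Covariance

variable {n : Type*} [Fintype n]

theorem IsHermitian.ofReal_re_trace_mul {A B : Matrix n n ℂ} (hA : A.IsHermitian)
    (hB : B.IsHermitian) : (((A * B).trace.re : ℝ) : ℂ) = (A * B).trace := by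
  refine Complex.conj_eq_iff_re.mp ?_
  rw [← Complex.star_def, ← trace_conjTranspose, conjTranspose_mul, hA.eq, hB.eq,
    trace_mul_comm]

theorem sum_mul_re_trace_mul {S : Type*} [Fintype S] (w : S → ℝ) (F : S → Matrix n n ℂ)
    (C : Matrix n n ℂ) :
    ∑ s, w s * (F s * C).trace.re = ((∑ s, (w s : ℂ) • F s) * C).trace.re := by
  simp [Finset.sum_mul, trace_sum, Complex.re_sum]

noncomputable def traceCov (ψ : Matrix n n ℂ) : Matrix n n ℂ →ₗ[ℂ] Matrix n n ℂ →ₗ[ℂ] ℂ :=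
  LinearMap.mk₂ ℂ (fun A B => (A * B * ψ).trace - (A * ψ).trace * (B * ψ).trace)
    (fun A₁ A₂ B => by simp only [add_mul, trace_add]; ring)
    (fun c A B => by simp only [smul_mul, trace_smul, smul_eq_mul]; ring)
    (fun A B₁ B₂ => by simp only [mul_add, add_mul, trace_add]; ring)
    (fun c A B => by simp only [Matrix.mul_smul, smul_mul, trace_smul, smul_eq_mul]; ring)

theorem traceCov_apply (ψ A B : Matrix n n ℂ) :
    traceCov ψ A B = (A * B * ψ).trace - (A * ψ).trace * (B * ψ).trace := rfl

variable [DecidableEq n]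

noncomputable def covKernel (ψ : Matrix n n ℂ) : Matrix (n × n) (n × n) ℂ :=
  of (fun p q => if q.2 = p.1 then ψ p.2 q.1 else 0) - ψ ⊗ₖ ψ

theorem traceCov_eq_trace_kronecker_mul_covKernel (ψ A B : Matrix n n ℂ) :
    traceCov ψ A B = ((A ⊗ₖ B) * covKernel ψ).trace := by
  rw [traceCov_apply, covKernel, Matrix.mul_sub, trace_sub, ← mul_kronecker_mul, trace_kronecker]
  congr 1
  simp only [trace, diag, mul_apply, of_apply, kronecker_apply, Fintype.sum_prod_type, mul_ite,
    mul_zero, Finset.sum_mul]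
  refine Finset.sum_congr rfl fun x _ => Finset.sum_comm.trans (Finset.sum_congr rfl fun y _ => ?_)
  simp [Finset.sum_ite_irrel]

theorem sum_smul_traceCov {S : Type*} [Fintype S] (ψ : Matrix n n ℂ) (w : S → ℂ)
    (A B : S → Matrix n n ℂ) :
    ∑ s, w s • traceCov ψ (A s) (B s) = ((∑ s, w s • (A s ⊗ₖ B s)) * covKernel ψ).trace := by
  simp only [traceCov_eq_trace_kronecker_mul_covKernel, Finset.sum_mul, trace_sum, smul_mul,
    trace_smul]

end Covariance

section Projection

variable {n : Type*} [Fintype n]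

theorem PosSemidef.re_trace_mul_self_le_sq {M : Matrix n n ℂ} (hM : M.PosSemidef) :
    (M * M).trace.re ≤ M.trace.re ^ 2 := by
  classical
  have htrace (X : Matrix n n ℂ) :
      (Unitary.conjStarAlgAut ℂ _ hM.isHermitian.eigenvectorUnitary X).trace = X.trace := by
    rw [Unitary.conjStarAlgAut_apply, trace_mul_cycle, Unitary.coe_star_mul_self, Matrix.one_mul]
  rw [hM.isHermitian.spectral_theorem, ← map_mul, htrace, htrace, diagonal_mul_diagonal,
    trace_diagonal, trace_diagonal]
  simpa [← sq, ← Complex.ofReal_pow, Complex.re_sum] using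
    Finset.sum_sq_le_sq_sum_of_nonneg fun i (_ : i ∈ Finset.univ) => hM.eigenvalues_nonneg i

variable {P ψ : Matrix n n ℂ}

theorem re_trace_mul_nonneg_of_isIdempotentElem (hP : P.IsHermitian) (hPP : IsIdempotentElem P)
    (hψ : ψ.PosSemidef) : 0 ≤ (P * ψ).trace.re := by
  have h := (hψ.mul_mul_conjTranspose_same P).trace_nonneg
  rw [hP.eq, trace_mul_cycle, hPP.eq] at h
  exact (Complex.nonneg_iff.mp h).1

theorem re_trace_mul_le_one_of_isIdempotentElem [DecidableEq n] (hP : P.IsHermitian)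
    (hPP : IsIdempotentElem P) (hψ : ψ.PosSemidef) (hψ1 : ψ.trace = 1) : (P * ψ).trace.re ≤ 1 := by
  have h := re_trace_mul_nonneg_of_isIdempotentElem (isHermitian_one.sub hP) hPP.one_sub hψ
  rw [Matrix.sub_mul, Matrix.one_mul, trace_sub, hψ1, Complex.sub_re, Complex.one_re] at h
  linarith

theorem trace_conj_mul_conj_of_isIdempotentElem (hPP : IsIdempotentElem P) :
    (P * ψ * P * (P * ψ * P)).trace = (P * ψ * P * ψ).trace := by
  rw [show P * ψ * P * (P * ψ * P) = P * ψ * (P * P) * ψ * P by noncomm_ring, hPP.eq,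
    trace_mul_comm, show P * (P * ψ * P * ψ) = P * P * ψ * P * ψ by noncomm_ring, hPP.eq]

theorem re_trace_mul_mul_mul_le_sq (hP : P.IsHermitian) (hPP : IsIdempotentElem P)
    (hψ : ψ.PosSemidef) : (P * ψ * P * ψ).trace.re ≤ (P * ψ).trace.re ^ 2 := by
  have h := (hψ.mul_mul_conjTranspose_same P).re_trace_mul_self_le_sq
  have htr : (P * ψ * P).trace = (P * ψ).trace := by rw [trace_mul_cycle, hPP.eq]
  rwa [hP.eq, trace_conj_mul_conj_of_isIdempotentElem hPP, htr] at h

end Projection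

end Matrix

section Variance

variable {N : ℕ} {ψ : Matrix (Fin N) (Fin N) ℂ}

theorem matVar_eq_re_traceCov {G : Matrix (Fin N) (Fin N) ℂ} (hG : G.IsHermitian)
    (hψ : ψ.IsHermitian) : matVar ψ G = (traceCov ψ G G).re := by
  rw [matVar, traceCov_apply, Complex.sub_re, ← hG.ofReal_re_trace_mul hψ, ← Complex.ofReal_mul]
  simp only [Complex.ofReal_re, sq]

theorem sum_mul_matVar_eq_re {S : Type*} [Fintype S] (hψ : ψ.IsHermitian) (w : S → ℝ)
    {G : S → Matrix (Fin N) (Fin N) ℂ} (hG : ∀ s, (G s).IsHermitian) :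
    ∑ s, w s * matVar ψ (G s) = (∑ s, (w s : ℂ) • traceCov ψ (G s) (G s)).re := by
  simp [matVar_eq_re_traceCov (hG _) hψ, Complex.re_sum]

theorem sum_mul_matVar_eq_matVar_add {S : Type*} [Fintype S] (hψ : ψ.IsHermitian)
    {w : S → ℝ} (hw : ∑ s, w s = 1) {H : S → Matrix (Fin N) (Fin N) ℂ}
    (hH : ∀ s, (H s).IsHermitian) {A : Matrix (Fin N) (Fin N) ℂ} (hA : A.IsHermitian)
    (hmean : ∑ s, (w s : ℂ) • H s = A) :
    ∑ s, w s * matVar ψ (H s) = matVar ψ A + ∑ s, w s * matVar ψ (H s - A) := by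
  have hwC : ∑ s, (w s : ℂ) = 1 := by exact_mod_cast hw
  have hdev : ∑ s, (w s : ℂ) • (H s - A) = 0 := by
    simp only [smul_sub, Finset.sum_sub_distrib, ← Finset.sum_smul, hmean, hwC, one_smul, sub_self]
  have hexpand : ∀ s, traceCov ψ (H s) (H s) = traceCov ψ A A + traceCov ψ A (H s - A)
      + traceCov ψ (H s - A) A + traceCov ψ (H s - A) (H s - A) := fun s => by
    conv_lhs => rw [← add_sub_cancel A (H s)]
    simp only [map_add, LinearMap.add_apply]
    ring
  have hcross₁ : ∑ s, (w s : ℂ) • traceCov ψ A (H s - A) = 0 := by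
    simpa only [map_sum, map_smul, map_zero] using congrArg (traceCov ψ A) hdev
  have hcross₂ : ∑ s, (w s : ℂ) • traceCov ψ (H s - A) A = 0 := by
    simpa only [map_sum, map_smul, LinearMap.sum_apply, LinearMap.smul_apply, map_zero,
      LinearMap.zero_apply] using
      congrArg (fun X => traceCov ψ X A) hdev
  rw [sum_mul_matVar_eq_re hψ w hH, sum_mul_matVar_eq_re hψ w fun s => (hH s).sub hA,
    matVar_eq_re_traceCov hA hψ, ← Complex.add_re]
  simp only [hexpand, smul_add, Finset.sum_add_distrib, hcross₁, hcross₂, ← Finset.sum_smul, hwC,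
    one_smul, add_zero]

theorem sum_mul_matVar_sum_of_uncorrelated {S ι : Type*} [Fintype S] [Fintype ι]
    (hψ : ψ.IsHermitian) (w : S → ℝ) {Y : S → ι → Matrix (Fin N) (Fin N) ℂ}
    (hY : ∀ s i, (Y s i).IsHermitian)
    (huncorr : ∀ i j, i ≠ j → ∑ s, (w s : ℂ) • (Y s i ⊗ₖ Y s j) = 0) :
    ∑ s, w s * matVar ψ (∑ i, Y s i) = ∑ i, ∑ s, w s * matVar ψ (Y s i) := by
  classical
  have hoff : ∀ i j, i ≠ j → ∑ s, (w s : ℂ) • traceCov ψ (Y s i) (Y s j) = 0 := fun i j hij => by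
    rw [sum_smul_traceCov, huncorr i j hij, Matrix.zero_mul, trace_zero]
  have hsum : ∀ s, (∑ i, Y s i).IsHermitian := fun s => isSelfAdjoint_sum _ fun i _ => hY s i
  rw [sum_mul_matVar_eq_re hψ w hsum,
    Finset.sum_congr rfl fun i _ => sum_mul_matVar_eq_re hψ w fun s => hY s i, ← Complex.re_sum]
  congr 1
  calc ∑ s, (w s : ℂ) • traceCov ψ (∑ i, Y s i) (∑ i, Y s i)
      = ∑ j, ∑ i, ∑ s, (w s : ℂ) • traceCov ψ (Y s i) (Y s j) := by
        simp only [map_sum, LinearMap.sum_apply, Finset.smul_sum]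
        rw [Finset.sum_comm]
        refine Finset.sum_congr rfl fun j _ => ?_
        rw [Finset.sum_comm]
    _ = ∑ j, ∑ s, (w s : ℂ) • traceCov ψ (Y s j) (Y s j) :=
        Finset.sum_congr rfl fun j _ =>
          Finset.sum_eq_single j (fun i _ hij => hoff i j hij) (by simp)

theorem sum_mul_matVar_add_sum_of_pairwise {S ι : Type*} [Fintype S] [Fintype ι]
    (hψ : ψ.IsHermitian) {w : S → ℝ} (hw : ∑ s, w s = 1) {C : Matrix (Fin N) (Fin N) ℂ}
    (hC : C.IsHermitian) {X : S → ι → Matrix (Fin N) (Fin N) ℂ} (hX : ∀ s i, (X s i).IsHermitian)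
    {M : ι → Matrix (Fin N) (Fin N) ℂ} (hM : ∀ i, (M i).IsHermitian)
    (hmean : ∀ i, ∑ s, (w s : ℂ) • X s i = M i)
    (hpair : ∀ i j, i ≠ j → ∑ s, (w s : ℂ) • (X s i ⊗ₖ X s j) = M i ⊗ₖ M j) :
    ∑ s, w s * matVar ψ (C + ∑ i, X s i) =
      matVar ψ (C + ∑ i, M i) + ∑ i, ∑ s, w s * matVar ψ (X s i - M i) := by
  have hwC : ∑ s, (w s : ℂ) = 1 := by exact_mod_cast hw
  have hsum : ∑ s, (w s : ℂ) • (C + ∑ i, X s i) = C + ∑ i, M i := by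
    simp only [smul_add, Finset.sum_add_distrib, ← Finset.sum_smul, hwC, one_smul,
      Finset.smul_sum]
    rw [Finset.sum_comm]
    simp only [hmean]
  have hdev : ∀ s, C + ∑ i, X s i - (C + ∑ i, M i) = ∑ i, (X s i - M i) := fun s => by
    rw [add_sub_add_left_eq_sub, Finset.sum_sub_distrib]
  rw [sum_mul_matVar_eq_matVar_add hψ hw
    (fun s => hC.add (isSelfAdjoint_sum _ fun i _ => hX s i))
    (hC.add (isSelfAdjoint_sum _ fun i _ => hM i)) hsum]
  simp only [hdev]
  exact congrArg _ (sum_mul_matVar_sum_of_uncorrelated hψ w (fun s i => (hX s i).sub (hM i))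
    fun i j hij => sum_smul_sub_kronecker_sub_eq_zero hwC (hmean i) (hmean j) (hpair i j hij))

end Variance

section TwoDesign

variable {N : ℕ} {P ψ : Matrix (Fin N) (Fin N) ℂ}

theorem matVar_of_isIdempotentElem (hP : IsIdempotentElem P) :
    matVar ψ P = (P * ψ).trace.re - (P * ψ).trace.re ^ 2 := by
  rw [matVar, hP.eq]

theorem matVar_ofReal_smul (c : ℝ) (G : Matrix (Fin N) (Fin N) ℂ) :
    matVar ψ ((c : ℂ) • G) = c ^ 2 * matVar ψ G := by
  simp only [matVar, smul_mul, Matrix.mul_smul, smul_smul, trace_smul, smul_eq_mul,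
    ← Complex.ofReal_mul, Complex.re_ofReal_mul]
  ring

theorem trace_swapMat_mul_kronecker (A B : Matrix (Fin N) (Fin N) ℂ) :
    (swapMat N * (A ⊗ₖ B)).trace = (A * B).trace := by
  simp only [trace, diag, mul_apply, swapMat, of_apply, kronecker_apply, Fintype.sum_prod_type,
    ite_mul, one_mul, zero_mul, ite_and, Finset.sum_ite_eq, Finset.mem_univ, if_true]
  exact Finset.sum_comm

theorem trace_twoDesign_mul_kronecker (hP : IsIdempotentElem P) :
    ((P ⊗ₖ P) * (1 + swapMat N) * (P ⊗ₖ P) * (ψ ⊗ₖ ψ)).trace =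
      (P * ψ).trace ^ 2 + (P * ψ * P * ψ).trace := by
  have hPP : (P ⊗ₖ P) * (P ⊗ₖ P) = P ⊗ₖ P := by rw [← mul_kronecker_mul, hP.eq]
  have hswap : ((P ⊗ₖ P) * swapMat N * (P ⊗ₖ P) * (ψ ⊗ₖ ψ)).trace = (P * ψ * P * ψ).trace := by
    rw [Matrix.mul_assoc (P ⊗ₖ P * swapMat N), trace_mul_cycle, trace_mul_comm,
      ← mul_kronecker_mul, ← mul_kronecker_mul, trace_swapMat_mul_kronecker,
      trace_conj_mul_conj_of_isIdempotentElem hP]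
  rw [Matrix.mul_add, Matrix.mul_one, Matrix.add_mul, hPP, Matrix.add_mul, trace_add, hswap,
    ← mul_kronecker_mul, trace_kronecker, sq]

theorem sum_mul_matVar_of_twoDesign {S : Type*} [Fintype S] (hP : P.IsHermitian)
    (hPP : IsIdempotentElem P) (hψ : ψ.IsHermitian) {d : ℝ} {w : S → ℝ}
    {φ : S → Matrix (Fin N) (Fin N) ℂ} (hφ : ∀ s, (φ s).IsHermitian)
    (hφφ : ∀ s, IsIdempotentElem (φ s)) (hfirst : ∑ s, (w s : ℂ) • φ s = (d : ℂ)⁻¹ • P)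
    (hsecond : ∑ s, (w s : ℂ) • (φ s ⊗ₖ φ s) =
      ((d : ℂ) * ((d : ℂ) + 1))⁻¹ • ((P ⊗ₖ P) * (1 + swapMat N) * (P ⊗ₖ P))) :
    ∑ s, w s * matVar ψ (φ s) = (P * ψ).trace.re / d -
      ((P * ψ).trace.re ^ 2 + (P * ψ * P * ψ).trace.re) / (d * (d + 1)) := by
  have hmean : ∑ s, w s * (φ s * ψ).trace.re = (P * ψ).trace.re / d := by
    rw [sum_mul_re_trace_mul, hfirst, smul_mul, trace_smul, smul_eq_mul, ← Complex.ofReal_inv,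
      Complex.re_ofReal_mul, inv_mul_eq_div]
  have hsq : ∀ s, (φ s * ψ).trace.re ^ 2 = ((φ s ⊗ₖ φ s) * (ψ ⊗ₖ ψ)).trace.re := fun s => by
    rw [← mul_kronecker_mul, trace_kronecker, ← (hφ s).ofReal_re_trace_mul hψ,
      ← Complex.ofReal_mul]
    simp only [Complex.ofReal_re, sq]
  have hmeanSq : ∑ s, w s * (φ s * ψ).trace.re ^ 2 =
      ((P * ψ).trace.re ^ 2 + (P * ψ * P * ψ).trace.re) / (d * (d + 1)) := by
    simp only [hsq]
    rw [sum_mul_re_trace_mul, hsecond, smul_mul, trace_smul, smul_eq_mul,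
      trace_twoDesign_mul_kronecker hPP, ← hP.ofReal_re_trace_mul hψ]
    norm_cast
    rw [Complex.re_ofReal_mul, Complex.add_re, Complex.ofReal_re, inv_mul_eq_div]
  simp only [matVar_of_isIdempotentElem (hφφ _), mul_sub, Finset.sum_sub_distrib, hmean, hmeanSq]

theorem le_sum_mul_matVar_sub_of_twoDesign {S : Type*} [Fintype S] (hP : P.IsHermitian)
    (hPP : IsIdempotentElem P) (hψ : ψ.PosSemidef) (hψ1 : ψ.trace = 1) {d : ℝ} (hd : 1 ≤ d)
    {w : S → ℝ} (hw : ∑ s, w s = 1) {φ : S → Matrix (Fin N) (Fin N) ℂ}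
    (hφ : ∀ s, (φ s).IsHermitian) (hφφ : ∀ s, IsIdempotentElem (φ s))
    (hfirst : ∑ s, (w s : ℂ) • φ s = (d : ℂ)⁻¹ • P)
    (hsecond : ∑ s, (w s : ℂ) • (φ s ⊗ₖ φ s) =
      ((d : ℂ) * ((d : ℂ) + 1))⁻¹ • ((P ⊗ₖ P) * (1 + swapMat N) * (P ⊗ₖ P))) :
    (d - 1) / (d * (d + 1)) * (P * ψ).trace.re ≤
      ∑ s, w s * matVar ψ (φ s - (d : ℂ)⁻¹ • P) := by
  have hmean : ((d : ℂ)⁻¹ • P).IsHermitian := hP.smul (IsSelfAdjoint.inv₀ (Complex.conj_ofReal d))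
  have hmeanVar : matVar ψ ((d : ℂ)⁻¹ • P) =
      d⁻¹ ^ 2 * ((P * ψ).trace.re - (P * ψ).trace.re ^ 2) := by
    rw [← Complex.ofReal_inv, matVar_ofReal_smul, matVar_of_isIdempotentElem hPP]
  have htotal := sum_mul_matVar_eq_matVar_add hψ.isHermitian hw hφ hmean hfirst
  rw [sum_mul_matVar_of_twoDesign hP hPP hψ.isHermitian hφ hφφ hfirst hsecond, hmeanVar] at htotal
  set τ := (P * ψ).trace.re
  set ρ := (P * ψ * P * ψ).trace.re
  have hτ0 : 0 ≤ τ := re_trace_mul_nonneg_of_isIdempotentElem hP hPP hψ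
  have hτ1 : τ ≤ 1 := re_trace_mul_le_one_of_isIdempotentElem hP hPP hψ hψ1
  have hρ : ρ ≤ τ ^ 2 := re_trace_mul_mul_mul_le_sq hP hPP hψ
  have hd0 : 0 < d := by linarith
  have hgap : ∑ s, w s * matVar ψ (φ s - (d : ℂ)⁻¹ • P) - (d - 1) / (d * (d + 1)) * τ =
      ((d - 1) * τ * (1 - τ) + d * (τ ^ 2 - ρ)) / (d ^ 2 * (d + 1)) := by
    rw [eq_sub_of_add_eq' htotal.symm]
    field_simp
    ring
  have hnum : 0 ≤ (d - 1) * τ * (1 - τ) + d * (τ ^ 2 - ρ) := by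
    have := sub_nonneg.mpr hd; have := sub_nonneg.mpr hτ1; have := sub_nonneg.mpr hρ
    positivity
  linarith [div_nonneg hnum (by positivity : (0 : ℝ) ≤ d ^ 2 * (d + 1))]

end TwoDesign

theorem expected_variance_lower_bound_general
    {N m : ℕ}
    (Pr : Fin m → Matrix (Fin N) (Fin N) ℂ)
    (hPrHerm : ∀ i, (Pr i).IsHermitian)
    (hPrIdem : ∀ i, Pr i * Pr i = Pr i)
    (d : Fin m → ℝ) (hd1 : ∀ i, 1 ≤ d i)
    (ψ : Matrix (Fin N) (Fin N) ℂ) (hψ : ψ.PosSemidef) (hψtr : ψ.trace = 1)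
    (S : Type) [Fintype S] (w : S → ℝ)
    (hwsum : ∑ s, w s = 1)
    (φ : S → Fin m → Matrix (Fin N) (Fin N) ℂ)
    (hφHerm : ∀ s i, (φ s i).IsHermitian)
    (hφIdem : ∀ s i, φ s i * φ s i = φ s i)
    (hfirst : ∀ i, ∑ s, (w s : ℂ) • φ s i = ((d i : ℂ))⁻¹ • Pr i)
    (hsecond : ∀ i, ∑ s, (w s : ℂ) • (φ s i ⊗ₖ φ s i) =
      ((d i : ℂ) * ((d i : ℂ) + 1))⁻¹ •
        ((Pr i ⊗ₖ Pr i) * (1 + swapMat N) * (Pr i ⊗ₖ Pr i)))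
    (hpair : ∀ i j, i ≠ j → ∑ s, (w s : ℂ) • (φ s i ⊗ₖ φ s j) =
      (((d i : ℂ))⁻¹ • Pr i) ⊗ₖ (((d j : ℂ))⁻¹ • Pr j)) :
    ∑ s, w s * matVar ψ (∑ i, (Pr i + φ s i)) ≥
      matVar ψ (∑ i, ((1 + 1 / d i : ℝ) : ℂ) • Pr i) +
        ∑ i, ((d i - 1) / (d i * (d i + 1))) * (((Pr i * ψ).trace).re) := by
  have hsplit : ∀ i, ((1 + 1 / d i : ℝ) : ℂ) • Pr i = Pr i + ((d i : ℂ))⁻¹ • Pr i := fun i => by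
    push_cast
    rw [add_smul, one_smul, one_div]
  simp only [Finset.sum_add_distrib, hsplit]
  rw [ge_iff_le, sum_mul_matVar_add_sum_of_pairwise hψ.isHermitian hwsum
    (isSelfAdjoint_sum _ fun i _ => hPrHerm i) hφHerm
    (fun i => (hPrHerm i).smul (IsSelfAdjoint.inv₀ (Complex.conj_ofReal (d i)))) hfirst hpair]
  gcongr with i
  exact le_sum_mul_matVar_sub_of_twoDesign (hPrHerm i) (hPrIdem i) hψ hψtr (hd1 i) hwsum
    (hφHerm · i) (hφIdem · i) (hfirst i) (hsecond i)

/-- Energy-dependent uncertainty principle for local altered Hamiltonians: for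
orthogonal projections `Π_i` with `d_i = Tr Π_i ≥ 1`, a density matrix `ψ`, and a
finitely supported random tuple `(w_s, φ(s))` of rank-one states in the ranges of the
`Π_i` with the prescribed first moments, 2-design second moments, and pairwise
independence, the expected variance of the altered Hamiltonians `H_φ = Σ_i (Π_i + φ_i)`
satisfies
`Σ_s w_s Var_ψ(H_{φ(s)}) ≥ Var_ψ(Σ_i (1 + 1/d_i) Π_i) + Σ_i ((d_i−1)/(d_i(d_i+1))) Tr(Π_i ψ)`. -/
theorem expected_variance_lower_bound
    {N m : ℕ} (hN : 1 ≤ N)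
    (Pr : Fin m → Matrix (Fin N) (Fin N) ℂ)
    (hPrHerm : ∀ i, (Pr i).IsHermitian)
    (hPrIdem : ∀ i, Pr i * Pr i = Pr i)
    (d : Fin m → ℝ) (hd : ∀ i, d i = ((Pr i).trace).re) (hd1 : ∀ i, 1 ≤ d i)
    (ψ : Matrix (Fin N) (Fin N) ℂ) (hψ : ψ.PosSemidef) (hψtr : ψ.trace = 1)
    (S : Type) [Fintype S] (w : S → ℝ)
    (hw0 : ∀ s, 0 ≤ w s) (hw1 : ∀ s, w s ≤ 1) (hwsum : ∑ s, w s = 1)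
    (φ : S → Fin m → Matrix (Fin N) (Fin N) ℂ)
    (hφHerm : ∀ s i, (φ s i).IsHermitian)
    (hφIdem : ∀ s i, φ s i * φ s i = φ s i)
    (hφtr : ∀ s i, (φ s i).trace = 1)
    (hφrange : ∀ s i, Pr i * φ s i = φ s i ∧ φ s i * Pr i = φ s i)
    (hfirst : ∀ i, ∑ s, (w s : ℂ) • φ s i = ((d i : ℂ))⁻¹ • Pr i)
    (hsecond : ∀ i, ∑ s, (w s : ℂ) • (φ s i ⊗ₖ φ s i) =
      ((d i : ℂ) * ((d i : ℂ) + 1))⁻¹ •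
        ((Pr i ⊗ₖ Pr i) * (1 + swapMat N) * (Pr i ⊗ₖ Pr i)))
    (hpair : ∀ i j, i ≠ j → ∑ s, (w s : ℂ) • (φ s i ⊗ₖ φ s j) =
      (((d i : ℂ))⁻¹ • Pr i) ⊗ₖ (((d j : ℂ))⁻¹ • Pr j)) :
    ∑ s, w s * matVar ψ (∑ i, (Pr i + φ s i)) ≥
      matVar ψ (∑ i, ((1 + 1 / d i : ℝ) : ℂ) • Pr i) +
        ∑ i, ((d i - 1) / (d i * (d i + 1))) * (((Pr i * ψ).trace).re) :=
  expected_variance_lower_bound_general Pr hPrHerm hPrIdem d hd1 ψ hψ hψtr S w hwsum φ hφHerm hφIdem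
    hfirst hsecond hpair
end

section
/- Let Π_1,…,Π_m be orthogonal projections on ℂ^N with d_i := Tr(Π_i) ≥ 1, ψ a density matrix, and (w_s, φ(s))_{s∈S} a finitely supported random tuple of rank-one states in the ranges of the Π_i satisfying the first-moment assumption Σ_s w_s φ_i(s) = Π_i/d_i and the pairwise-independence assumption Σ_s w_s (φ_i(s) ⊗ φ_j(s)) = (Π_i/d_i) ⊗ (Π_j/d_j) for i ≠ j. Then the following exact identity holds: Σ_s w_s Var_ψ(H_{φ(s)}) = Var_ψ( Σ_{i=1}^m (1 + 1/d_i) Π_i ) + Σ_{i=1}^m [ ((d_i − 1)/d_i²) Tr(Π_i ψ) + (1/d_i²) (Tr(Π_i ψ))² − Σ_s w_s (Tr(φ_i(s) ψ))² ]. -/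
open Matrix Kronecker
open scoped ComplexOrder

lemma sq_re_of_real {z : ℂ} (h : ((z.re : ℝ) : ℂ) = z) : (z ^ 2).re = z.re ^ 2 := by
  have him : z.im = 0 := by rw [← h]; simp
  rw [sq, sq, Complex.mul_re, him]; ring

lemma herm_trace_real {N : ℕ} (G ψ : Matrix (Fin N) (Fin N) ℂ) (hG : G.IsHermitian)
    (hψ : ψ.IsHermitian) : (((G * ψ).trace.re : ℝ) : ℂ) = (G * ψ).trace := by
  have h : (starRingEnd ℂ) ((G * ψ).trace) = (G * ψ).trace := by
    calc (starRingEnd ℂ) ((G * ψ).trace) = ((G * ψ)ᴴ).trace := by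
          rw [Matrix.trace_conjTranspose]; rfl
    _ = (ψᴴ * Gᴴ).trace := by rw [Matrix.conjTranspose_mul]
    _ = (ψ * G).trace := by rw [hψ.eq, hG.eq]
    _ = (G * ψ).trace := Matrix.trace_mul_comm _ _
  exact Complex.conj_eq_iff_re.mp h

noncomputable def Mmat {N : ℕ} (ψ : Matrix (Fin N) (Fin N) ℂ) :
    Matrix (Fin N × Fin N) (Fin N × Fin N) ℂ :=
  Matrix.of fun p q => if q.2 = p.1 then ψ p.2 q.1 else 0

lemma kron_trace_M {N : ℕ} (ψ X Y : Matrix (Fin N) (Fin N) ℂ) :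
    ((X ⊗ₖ Y) * Mmat ψ).trace = (X * Y * ψ).trace := by
  have L : ((X ⊗ₖ Y) * Mmat ψ).trace
      = ∑ a, ∑ b, ∑ e, X a b * Y b e * ψ e a := by
    simp only [Matrix.trace, Matrix.diag, Matrix.mul_apply, Mmat, Matrix.of_apply,
      kroneckerMap_apply, Fintype.sum_prod_type, mul_ite, mul_zero]
    refine Finset.sum_congr rfl fun a _ => Finset.sum_congr rfl fun b _ => ?_
    rw [Finset.sum_comm]
    simp [Finset.sum_ite_eq]
  have R : (X * Y * ψ).trace = ∑ a, ∑ e, ∑ b, X a b * Y b e * ψ e a := by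
    simp only [Matrix.trace, Matrix.diag, Matrix.mul_apply, Finset.sum_mul]
  rw [L, R]
  refine Finset.sum_congr rfl fun a _ => ?_
  exact Finset.sum_comm

lemma exp_trace {n : Type*} [Fintype n] {S : Type} [Fintype S] (w : S → ℝ)
    (F : S → Matrix n n ℂ) (G : Matrix n n ℂ) (h : ∑ s, (w s : ℂ) • F s = G)
    (C D : Matrix n n ℂ) :
    ∑ s, (w s : ℂ) * (C * F s * D).trace = (C * G * D).trace := by
  have hG : C * G * D = ∑ s, (w s : ℂ) • (C * F s * D) := by
    rw [← h, Matrix.mul_sum, Matrix.sum_mul]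
    refine Finset.sum_congr rfl fun s _ => ?_
    rw [Matrix.mul_smul, Matrix.smul_mul]
  rw [hG, Matrix.trace_sum]
  exact Finset.sum_congr rfl fun s _ => by rw [Matrix.trace_smul, smul_eq_mul]


/-- Exact identity for the expected variance of the local altered Hamiltonians,
assuming only the first-moment and pairwise-independence conditions:
`Σ_s w_s Var_ψ(H_{φ(s)}) = Var_ψ(Σ_i (1 + 1/d_i) Π_i)
  + Σ_i [ ((d_i−1)/d_i²) Tr(Π_i ψ) + (1/d_i²)(Tr(Π_i ψ))² − Σ_s w_s (Tr(φ_i(s) ψ))² ]`. -/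
theorem expected_variance_exact_identity
    {N m : ℕ} (hN : 1 ≤ N)
    (Pr : Fin m → Matrix (Fin N) (Fin N) ℂ)
    (hPrHerm : ∀ i, (Pr i).IsHermitian)
    (hPrIdem : ∀ i, Pr i * Pr i = Pr i)
    (d : Fin m → ℝ) (hd : ∀ i, d i = ((Pr i).trace).re) (hd1 : ∀ i, 1 ≤ d i)
    (ψ : Matrix (Fin N) (Fin N) ℂ) (hψ : ψ.PosSemidef) (hψtr : ψ.trace = 1)
    (S : Type) [Fintype S] (w : S → ℝ)
    (hw0 : ∀ s, 0 ≤ w s) (hw1 : ∀ s, w s ≤ 1) (hwsum : ∑ s, w s = 1)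
    (φ : S → Fin m → Matrix (Fin N) (Fin N) ℂ)
    (hφHerm : ∀ s i, (φ s i).IsHermitian)
    (hφIdem : ∀ s i, φ s i * φ s i = φ s i)
    (hφtr : ∀ s i, (φ s i).trace = 1)
    (hφrange : ∀ s i, Pr i * φ s i = φ s i ∧ φ s i * Pr i = φ s i)
    (hfirst : ∀ i, ∑ s, (w s : ℂ) • φ s i = ((d i : ℂ))⁻¹ • Pr i)
    (hpair : ∀ i j, i ≠ j → ∑ s, (w s : ℂ) • (φ s i ⊗ₖ φ s j) =
      (((d i : ℂ))⁻¹ • Pr i) ⊗ₖ (((d j : ℂ))⁻¹ • Pr j)) :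
    ∑ s, w s * matVar ψ (∑ i, (Pr i + φ s i)) =
      matVar ψ (∑ i, ((1 + 1 / d i : ℝ) : ℂ) • Pr i) +
        ∑ i, (((d i - 1) / (d i) ^ 2) * (((Pr i * ψ).trace).re) +
          (1 / (d i) ^ 2) * ((((Pr i * ψ).trace).re) ^ 2) -
          ∑ s, w s * ((((φ s i * ψ).trace).re) ^ 2)) := by
  classical
  have hψH : ψ.IsHermitian := hψ.1
  have hd0 : ∀ i, (d i : ℂ) ≠ 0 := fun i => by
    have h1 : (0:ℝ) < d i := lt_of_lt_of_le one_pos (hd1 i)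
    exact_mod_cast h1.ne'
  have hwC : ∑ s, (w s : ℂ) = 1 := by exact_mod_cast hwsum
  -- first-moment consequences
  have E1 : ∀ i, ∑ s, (w s:ℂ) * (φ s i * ψ).trace = (d i:ℂ)⁻¹ * (Pr i * ψ).trace := by
    intro i
    have h1 := exp_trace w (fun s => φ s i) _ (hfirst i) 1 ψ
    simpa [Matrix.smul_mul, Matrix.trace_smul, smul_eq_mul] using h1
  have E2 : ∀ i j, ∑ s, (w s:ℂ) * (Pr i * φ s j * ψ).trace
      = (d j:ℂ)⁻¹ * (Pr i * Pr j * ψ).trace := by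
    intro i j
    have h1 := exp_trace w (fun s => φ s j) _ (hfirst j) (Pr i) ψ
    simpa [Matrix.mul_smul, Matrix.smul_mul, Matrix.trace_smul, smul_eq_mul] using h1
  have E3 : ∀ i j, ∑ s, (w s:ℂ) * (φ s i * Pr j * ψ).trace
      = (d i:ℂ)⁻¹ * (Pr i * Pr j * ψ).trace := by
    intro i j
    have h1 := exp_trace w (fun s => φ s i) _ (hfirst i) 1 (Pr j * ψ)
    simpa [Matrix.smul_mul, Matrix.trace_smul, smul_eq_mul, ← mul_assoc] using h1
  have E4 : ∀ i j, i ≠ j → ∑ s, (w s:ℂ) * (φ s i * φ s j * ψ).trace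
      = (d j:ℂ)⁻¹ * ((d i:ℂ)⁻¹ * (Pr i * Pr j * ψ).trace) := by
    intro i j hij
    have h1 := exp_trace w (fun s => φ s i ⊗ₖ φ s j) _ (hpair i j hij) 1 (Mmat ψ)
    simpa [Matrix.smul_kronecker, Matrix.kronecker_smul, Matrix.smul_mul,
      Matrix.trace_smul, smul_eq_mul, kron_trace_M] using h1
  have E5 : ∀ i j, i ≠ j → ∑ s, (w s:ℂ) * ((φ s i * ψ).trace * (φ s j * ψ).trace)
      = ((d i:ℂ)⁻¹ * (Pr i * ψ).trace) * ((d j:ℂ)⁻¹ * (Pr j * ψ).trace) := by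
    intro i j hij
    have h1 := exp_trace w (fun s => φ s i ⊗ₖ φ s j) _ (hpair i j hij) 1 (ψ ⊗ₖ ψ)
    simpa [← Matrix.mul_kronecker_mul, Matrix.trace_kronecker, Matrix.smul_mul,
      Matrix.trace_smul, smul_eq_mul] using h1
  -- expansions
  have hAA : ∀ s, ((∑ i, (Pr i + φ s i)) * (∑ i, (Pr i + φ s i)) * ψ).trace
      = ∑ i, ∑ j, ((Pr i * Pr j * ψ).trace + (Pr i * φ s j * ψ).trace
          + (φ s i * Pr j * ψ).trace + (φ s i * φ s j * ψ).trace) := by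
    intro s
    rw [Finset.sum_mul_sum, Matrix.sum_mul, Matrix.trace_sum]
    refine Finset.sum_congr rfl fun i _ => ?_
    rw [Matrix.sum_mul, Matrix.trace_sum]
    refine Finset.sum_congr rfl fun j _ => ?_
    simp only [add_mul, mul_add, Matrix.trace_add]
    ring
  have hAψ : ∀ s, ((∑ i, (Pr i + φ s i)) * ψ).trace
      = ∑ i, ((Pr i * ψ).trace + (φ s i * ψ).trace) := by
    intro s
    rw [Matrix.sum_mul, Matrix.trace_sum]
    exact Finset.sum_congr rfl fun i _ => by rw [add_mul, Matrix.trace_add]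
  have hBB : ((∑ i, ((1 + 1 / d i : ℝ) : ℂ) • Pr i) * (∑ i, ((1 + 1 / d i : ℝ) : ℂ) • Pr i) * ψ).trace
      = ∑ i, ∑ j, ((1 + 1 / d i : ℝ) : ℂ) * ((1 + 1 / d j : ℝ) : ℂ) * (Pr i * Pr j * ψ).trace := by
    rw [Finset.sum_mul_sum, Matrix.sum_mul, Matrix.trace_sum]
    refine Finset.sum_congr rfl fun i _ => ?_
    rw [Matrix.sum_mul, Matrix.trace_sum]
    refine Finset.sum_congr rfl fun j _ => ?_
    simp only [Matrix.smul_mul, Matrix.mul_smul, Matrix.trace_smul, smul_eq_mul]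
    ring
  have hBψ : ((∑ i, ((1 + 1 / d i : ℝ) : ℂ) • Pr i) * ψ).trace
      = ∑ i, ((1 + 1 / d i : ℝ) : ℂ) * (Pr i * ψ).trace := by
    rw [Matrix.sum_mul, Matrix.trace_sum]
    refine Finset.sum_congr rfl fun i _ => ?_
    rw [Matrix.smul_mul, Matrix.trace_smul, smul_eq_mul]
  -- hermitian facts
  have hAH : ∀ s, (∑ i, (Pr i + φ s i)).IsHermitian := by
    intro s
    unfold Matrix.IsHermitian
    rw [Matrix.conjTranspose_sum]
    exact Finset.sum_congr rfl fun i _ => by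
      rw [Matrix.conjTranspose_add, (hPrHerm i).eq, (hφHerm s i).eq]
  have hBH : (∑ i, ((1 + 1 / d i : ℝ) : ℂ) • Pr i).IsHermitian := by
    unfold Matrix.IsHermitian
    rw [Matrix.conjTranspose_sum]
    exact Finset.sum_congr rfl fun i _ => by
      rw [Matrix.conjTranspose_smul, (hPrHerm i).eq, Complex.star_def, Complex.conj_ofReal]
  -- reality facts
  have hreA : ∀ s, ((((∑ i, (Pr i + φ s i)) * ψ).trace.re : ℝ) : ℂ)
      = ((∑ i, (Pr i + φ s i)) * ψ).trace := fun s => herm_trace_real _ _ (hAH s) hψH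
  have hreB : ((((∑ i, ((1 + 1 / d i : ℝ) : ℂ) • Pr i) * ψ).trace.re : ℝ) : ℂ)
      = ((∑ i, ((1 + 1 / d i : ℝ) : ℂ) • Pr i) * ψ).trace := herm_trace_real _ _ hBH hψH
  have hreP : ∀ i, (((Pr i * ψ).trace.re : ℝ) : ℂ) = (Pr i * ψ).trace :=
    fun i => herm_trace_real _ _ (hPrHerm i) hψH
  have hreq : ∀ s i, (((φ s i * ψ).trace.re : ℝ) : ℂ) = (φ s i * ψ).trace :=
    fun s i => herm_trace_real _ _ (hφHerm s i) hψH
  -- off-diagonal pair identity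
  have offd : ∀ i j : Fin m, i ≠ j →
      ∑ s, (w s:ℂ) * (((Pr i * Pr j * ψ).trace + (Pr i * φ s j * ψ).trace
          + (φ s i * Pr j * ψ).trace + (φ s i * φ s j * ψ).trace)
        - ((Pr i * ψ).trace + (φ s i * ψ).trace) * ((Pr j * ψ).trace + (φ s j * ψ).trace))
      = ((1 + 1 / d i : ℝ) : ℂ) * ((1 + 1 / d j : ℝ) : ℂ)
          * ((Pr i * Pr j * ψ).trace - (Pr i * ψ).trace * (Pr j * ψ).trace) := by
    intro i j hij
    have hsum : ∑ s, (w s:ℂ) * (((Pr i * Pr j * ψ).trace + (Pr i * φ s j * ψ).trace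
          + (φ s i * Pr j * ψ).trace + (φ s i * φ s j * ψ).trace)
        - ((Pr i * ψ).trace + (φ s i * ψ).trace) * ((Pr j * ψ).trace + (φ s j * ψ).trace))
        = ∑ s, ((w s:ℂ) * (Pr i * Pr j * ψ).trace
            + (w s:ℂ) * (Pr i * φ s j * ψ).trace
            + (w s:ℂ) * (φ s i * Pr j * ψ).trace
            + (w s:ℂ) * (φ s i * φ s j * ψ).trace
            - (w s:ℂ) * ((Pr i * ψ).trace * (Pr j * ψ).trace)
            - (Pr i * ψ).trace * ((w s:ℂ) * (φ s j * ψ).trace)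
            - ((w s:ℂ) * (φ s i * ψ).trace) * (Pr j * ψ).trace
            - (w s:ℂ) * ((φ s i * ψ).trace * (φ s j * ψ).trace)) :=
      Finset.sum_congr rfl fun s _ => by ring
    rw [hsum]
    simp only [Finset.sum_add_distrib, Finset.sum_sub_distrib,
      ← Finset.sum_mul, ← Finset.mul_sum]
    rw [hwC, E1 i, E1 j, E2 i j, E3 i j, E4 i j hij, E5 i j hij]
    push_cast
    field_simp
    ring
  -- diagonal pair identity
  have diag : ∀ k : Fin m,
      ∑ s, (w s:ℂ) * (((Pr k * Pr k * ψ).trace + (Pr k * φ s k * ψ).trace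
          + (φ s k * Pr k * ψ).trace + (φ s k * φ s k * ψ).trace)
        - ((Pr k * ψ).trace + (φ s k * ψ).trace) * ((Pr k * ψ).trace + (φ s k * ψ).trace))
      = ((1 + 1 / d k : ℝ) : ℂ) * ((1 + 1 / d k : ℝ) : ℂ)
          * ((Pr k * Pr k * ψ).trace - (Pr k * ψ).trace * (Pr k * ψ).trace)
        + ((((d k - 1) / (d k) ^ 2 : ℝ) : ℂ) * (Pr k * ψ).trace
            + ((1 / (d k) ^ 2 : ℝ) : ℂ) * ((Pr k * ψ).trace) ^ 2
            - ∑ s, (w s:ℂ) * ((φ s k * ψ).trace) ^ 2) := by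
    intro k
    have m1 : ∀ s, Pr k * φ s k * ψ = φ s k * ψ := fun s => by rw [(hφrange s k).1]
    have m2 : ∀ s, φ s k * Pr k * ψ = φ s k * ψ := fun s => by rw [(hφrange s k).2]
    have m3 : ∀ s, φ s k * φ s k * ψ = φ s k * ψ := fun s => by rw [hφIdem s k]
    have m4 : Pr k * Pr k * ψ = Pr k * ψ := by rw [hPrIdem k]
    have hsum : ∑ s, (w s:ℂ) * (((Pr k * Pr k * ψ).trace + (Pr k * φ s k * ψ).trace
          + (φ s k * Pr k * ψ).trace + (φ s k * φ s k * ψ).trace)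
        - ((Pr k * ψ).trace + (φ s k * ψ).trace) * ((Pr k * ψ).trace + (φ s k * ψ).trace))
        = ∑ s, ((w s:ℂ) * (Pr k * ψ).trace
            - (w s:ℂ) * ((Pr k * ψ).trace * (Pr k * ψ).trace)
            + (3 - 2 * (Pr k * ψ).trace) * ((w s:ℂ) * (φ s k * ψ).trace)
            - (w s:ℂ) * ((φ s k * ψ).trace) ^ 2) :=
      Finset.sum_congr rfl fun s _ => by rw [m1 s, m2 s, m3 s, m4]; ring
    rw [hsum, m4]
    simp only [Finset.sum_add_distrib, Finset.sum_sub_distrib,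
      ← Finset.sum_mul, ← Finset.mul_sum]
    rw [hwC, E1 k]
    have hdk := hd0 k
    push_cast
    field_simp
    ring
  -- combined per-pair identity
  have key : ∀ i j : Fin m,
      ∑ s, (w s:ℂ) * (((Pr i * Pr j * ψ).trace + (Pr i * φ s j * ψ).trace
          + (φ s i * Pr j * ψ).trace + (φ s i * φ s j * ψ).trace)
        - ((Pr i * ψ).trace + (φ s i * ψ).trace) * ((Pr j * ψ).trace + (φ s j * ψ).trace))
      = ((1 + 1 / d i : ℝ) : ℂ) * ((1 + 1 / d j : ℝ) : ℂ)
          * ((Pr i * Pr j * ψ).trace - (Pr i * ψ).trace * (Pr j * ψ).trace)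
        + (if j = i then
            (((d i - 1) / (d i) ^ 2 : ℝ) : ℂ) * (Pr i * ψ).trace
            + ((1 / (d i) ^ 2 : ℝ) : ℂ) * ((Pr i * ψ).trace) ^ 2
            - ∑ s, (w s:ℂ) * ((φ s i * ψ).trace) ^ 2
          else 0) := by
    intro i j
    by_cases hji : j = i
    · rw [hji, if_pos rfl]
      exact diag i
    · rw [if_neg hji, add_zero]
      exact offd i j (fun h => hji h.symm)
  -- the complex-level identity
  have CI : ∑ s, (w s:ℂ) * (((∑ i, (Pr i + φ s i)) * (∑ i, (Pr i + φ s i)) * ψ).trace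
        - (((∑ i, (Pr i + φ s i)) * ψ).trace) ^ 2)
      = (((∑ i, ((1 + 1 / d i : ℝ) : ℂ) • Pr i) * (∑ i, ((1 + 1 / d i : ℝ) : ℂ) • Pr i) * ψ).trace
          - (((∑ i, ((1 + 1 / d i : ℝ) : ℂ) • Pr i) * ψ).trace) ^ 2)
        + ∑ i, ((((d i - 1) / (d i) ^ 2 : ℝ) : ℂ) * (Pr i * ψ).trace
            + ((1 / (d i) ^ 2 : ℝ) : ℂ) * ((Pr i * ψ).trace) ^ 2
            - ∑ s, (w s:ℂ) * ((φ s i * ψ).trace) ^ 2) := by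
    have hR1 : ((∑ i, ((1 + 1 / d i : ℝ) : ℂ) • Pr i) * (∑ i, ((1 + 1 / d i : ℝ) : ℂ) • Pr i) * ψ).trace
          - (((∑ i, ((1 + 1 / d i : ℝ) : ℂ) • Pr i) * ψ).trace) ^ 2
        = ∑ i, ∑ j, ((1 + 1 / d i : ℝ) : ℂ) * ((1 + 1 / d j : ℝ) : ℂ)
            * ((Pr i * Pr j * ψ).trace - (Pr i * ψ).trace * (Pr j * ψ).trace) := by
      rw [hBB, hBψ, sq, Finset.sum_mul_sum, ← Finset.sum_sub_distrib]
      refine Finset.sum_congr rfl fun i _ => ?_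
      rw [← Finset.sum_sub_distrib]
      exact Finset.sum_congr rfl fun j _ => by ring
    calc ∑ s, (w s:ℂ) * (((∑ i, (Pr i + φ s i)) * (∑ i, (Pr i + φ s i)) * ψ).trace
          - (((∑ i, (Pr i + φ s i)) * ψ).trace) ^ 2)
        = ∑ s, ∑ i, ∑ j, (w s:ℂ) * (((Pr i * Pr j * ψ).trace + (Pr i * φ s j * ψ).trace
            + (φ s i * Pr j * ψ).trace + (φ s i * φ s j * ψ).trace)
          - ((Pr i * ψ).trace + (φ s i * ψ).trace) * ((Pr j * ψ).trace + (φ s j * ψ).trace)) := by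
          refine Finset.sum_congr rfl fun s _ => ?_
          rw [hAA s, hAψ s, sq, Finset.sum_mul_sum, ← Finset.sum_sub_distrib, Finset.mul_sum]
          refine Finset.sum_congr rfl fun i _ => ?_
          rw [← Finset.sum_sub_distrib, Finset.mul_sum]
      _ = ∑ i, ∑ j, ∑ s, (w s:ℂ) * (((Pr i * Pr j * ψ).trace + (Pr i * φ s j * ψ).trace
            + (φ s i * Pr j * ψ).trace + (φ s i * φ s j * ψ).trace)
          - ((Pr i * ψ).trace + (φ s i * ψ).trace) * ((Pr j * ψ).trace + (φ s j * ψ).trace)) := by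
          rw [Finset.sum_comm]
          exact Finset.sum_congr rfl fun i _ => Finset.sum_comm
      _ = ∑ i, ∑ j, (((1 + 1 / d i : ℝ) : ℂ) * ((1 + 1 / d j : ℝ) : ℂ)
            * ((Pr i * Pr j * ψ).trace - (Pr i * ψ).trace * (Pr j * ψ).trace)
          + (if j = i then
              (((d i - 1) / (d i) ^ 2 : ℝ) : ℂ) * (Pr i * ψ).trace
              + ((1 / (d i) ^ 2 : ℝ) : ℂ) * ((Pr i * ψ).trace) ^ 2
              - ∑ s, (w s:ℂ) * ((φ s i * ψ).trace) ^ 2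
            else 0)) :=
          Finset.sum_congr rfl fun i _ => Finset.sum_congr rfl fun j _ => key i j
      _ = (∑ i, ∑ j, ((1 + 1 / d i : ℝ) : ℂ) * ((1 + 1 / d j : ℝ) : ℂ)
            * ((Pr i * Pr j * ψ).trace - (Pr i * ψ).trace * (Pr j * ψ).trace))
          + ∑ i, ((((d i - 1) / (d i) ^ 2 : ℝ) : ℂ) * (Pr i * ψ).trace
              + ((1 / (d i) ^ 2 : ℝ) : ℂ) * ((Pr i * ψ).trace) ^ 2
              - ∑ s, (w s:ℂ) * ((φ s i * ψ).trace) ^ 2) := by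
          rw [← Finset.sum_add_distrib]
          refine Finset.sum_congr rfl fun i _ => ?_
          rw [Finset.sum_add_distrib]
          congr 1
          simp
      _ = _ := by rw [hR1]
  -- re-transfer
  have hL : ∑ s, w s * matVar ψ (∑ i, (Pr i + φ s i))
      = (∑ s, (w s:ℂ) * (((∑ i, (Pr i + φ s i)) * (∑ i, (Pr i + φ s i)) * ψ).trace
          - (((∑ i, (Pr i + φ s i)) * ψ).trace) ^ 2)).re := by
    rw [Complex.re_sum]
    refine Finset.sum_congr rfl fun s _ => ?_
    rw [Complex.re_ofReal_mul, Complex.sub_re, sq_re_of_real (hreA s)]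
    rfl
  have hRt : matVar ψ (∑ i, ((1 + 1 / d i : ℝ) : ℂ) • Pr i) +
        ∑ i, (((d i - 1) / (d i) ^ 2) * (((Pr i * ψ).trace).re) +
          (1 / (d i) ^ 2) * ((((Pr i * ψ).trace).re) ^ 2) -
          ∑ s, w s * ((((φ s i * ψ).trace).re) ^ 2))
      = ((((∑ i, ((1 + 1 / d i : ℝ) : ℂ) • Pr i) * (∑ i, ((1 + 1 / d i : ℝ) : ℂ) • Pr i) * ψ).trace
          - (((∑ i, ((1 + 1 / d i : ℝ) : ℂ) • Pr i) * ψ).trace) ^ 2)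
        + ∑ i, ((((d i - 1) / (d i) ^ 2 : ℝ) : ℂ) * (Pr i * ψ).trace
            + ((1 / (d i) ^ 2 : ℝ) : ℂ) * ((Pr i * ψ).trace) ^ 2
            - ∑ s, (w s:ℂ) * ((φ s i * ψ).trace) ^ 2)).re := by
    rw [Complex.add_re, Complex.sub_re, sq_re_of_real hreB, Complex.re_sum]
    congr 1
    refine Finset.sum_congr rfl fun i _ => ?_
    rw [Complex.sub_re, Complex.add_re, Complex.re_ofReal_mul, Complex.re_ofReal_mul,
      sq_re_of_real (hreP i), Complex.re_sum]
    congr 1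
    refine Finset.sum_congr rfl fun t _ => ?_
    rw [Complex.re_ofReal_mul, sq_re_of_real (hreq t i)]
  rw [hL, hRt, CI]
end

section
/- In the sparse altered Hamiltonian setup, the expectation of W(ω)ᵀW(ω) over ω equals H; that is, for every pair of indices β', β one has E_ω[ (W(ω)ᵀ W(ω))_{β',β} ] = E_β if β' = β, and 0 otherwise, so that E_ω[WᵀW] = diagonal(E) = H. -/
/-!
Expanding the product, `E[(WᵀW)_{β',β}] = ∑_α T_{α,β'} T_{α,β} E[f_{α,β'} f_{α,β}]`.
Independent centered variables are orthogonal in `L²`, so only the terms with `β' = β` survive,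
and there the moment is the variance `E_β / t_β`. Since `T` is `0/1`-valued,
`∑_α T_{α,β}² = t_β`, which leaves `E_β`.
-/

open MeasureTheory ProbabilityTheory Matrix

/-- The random perturbation matrix `W(ω)` with entries `W(ω)_{α,β} = T_{α,β} f_{α,β}(ω)`. -/
noncomputable def Wmat {B : Type*} {Ω : Type*} (T : B → B → ℝ) (f : B → B → Ω → ℝ)
    (ω : Ω) : Matrix B B ℝ :=
  Matrix.of fun α β => T α β * f α β ω

namespace ProbabilityTheory

variable {Ω 𝓧 : Type*} {mΩ : MeasurableSpace Ω} {m𝓧 : MeasurableSpace 𝓧} {P : Measure Ω}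

/-- The pushforward along a map that is not a.e.-measurable is `0`, so a law equation with a
nonzero law already gives a.e.-measurability. -/
lemma HasLaw.of_map_eq {X : Ω → 𝓧} {μ : Measure 𝓧} [NeZero μ] (h : P.map X = μ) :
    HasLaw X μ P :=
  ⟨.of_map_ne_zero (h ▸ NeZero.ne μ), h⟩

section Gaussian

variable {X : Ω → ℝ} {μ : ℝ} {v : NNReal}

lemma HasLaw.integral_eq_of_gaussianReal (hX : HasLaw X (gaussianReal μ v) P) : P[X] = μ :=
  hX.integral_eq.trans integral_id_gaussianReal

lemma HasLaw.variance_eq_of_gaussianReal (hX : HasLaw X (gaussianReal μ v) P) :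
    Var[X; P] = v :=
  hX.variance_eq.trans variance_id_gaussianReal

lemma HasLaw.memLp_of_gaussianReal (hX : HasLaw X (gaussianReal μ v) P) {p : ENNReal}
    (hp : p ≠ ⊤) : MemLp X p P := by
  have hid := memLp_id_gaussianReal' (μ := μ) (v := v) p hp
  rw [← hX.map_eq] at hid
  exact hid.comp_of_map hX.aemeasurable

end Gaussian

lemma integral_mul_eq_ite_variance_of_pairwise_indepFun {ι : Type*} [DecidableEq ι]
    {X : ι → Ω → ℝ} (hX : ∀ i, AEMeasurable (X i) P) (hmean : ∀ i, P[X i] = 0)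
    (hindep : Pairwise fun i j => X i ⟂ᵢ[P] X j) (i j : ι) :
    ∫ ω, X i ω * X j ω ∂P = if i = j then Var[X i; P] else 0 := by
  split_ifs with hij
  · subst hij
    simp_rw [variance_of_integral_eq_zero (hX i) (hmean i), sq]
  · simpa [hmean] using (hindep hij).integral_mul_eq_mul_integral
      (hX i).aestronglyMeasurable (hX j).aestronglyMeasurable

end ProbabilityTheory

lemma Wmat_transpose_mul_apply {B Ω : Type*} [Fintype B] (T : B → B → ℝ)
    (f : B → B → Ω → ℝ) (ω : Ω) (β' β : B) :
    ((Wmat T f ω)ᵀ * Wmat T f ω) β' β = ∑ α, T α β' * T α β * (f α β' ω * f α β ω) := by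
  simp only [Wmat, mul_apply, transpose_apply, of_apply]
  exact Finset.sum_congr rfl fun α _ => by ring

lemma integral_Wmat_transpose_mul_apply {B Ω : Type*} [Fintype B] [MeasurableSpace Ω]
    {P : Measure Ω} (T : B → B → ℝ) (f : B → B → Ω → ℝ) {β' β : B}
    (hint : ∀ α, Integrable (fun ω => f α β' ω * f α β ω) P) :
    ∫ ω, ((Wmat T f ω)ᵀ * Wmat T f ω) β' β ∂P
      = ∑ α, T α β' * T α β * ∫ ω, f α β' ω * f α β ω ∂P := by
  simp_rw [Wmat_transpose_mul_apply]
  rw [integral_finsetSum _ fun α _ => (hint α).const_mul _]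
  simp_rw [integral_const_mul]

theorem expectation_WtW_eq_diagonal_general
    {B : Type*} [Fintype B] [DecidableEq B]
    (E : B → ℝ) (hE : ∀ β, 0 ≤ E β)
    (T : B → B → ℝ) (hT01 : ∀ α β, T α β = 0 ∨ T α β = 1)
    (t : B → ℝ) (ht : ∀ β, t β = ∑ α, T α β) (ht1 : ∀ β, 1 ≤ t β)
    {Ω : Type*} [MeasureSpace Ω]
    (f : B → B → Ω → ℝ)
    (hindep : iIndepFun
      (fun p : B × B => f p.1 p.2) ℙ)
    (hdist : ∀ α β, Measure.map (f α β) ℙ = gaussianReal 0 (Real.toNNReal (E β / t β))) :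
    ∀ β' β, (∫ ω, ((Wmat T f ω)ᵀ * Wmat T f ω) β' β ∂ℙ) = Matrix.diagonal E β' β := by
  intro β' β
  have ht0 (β : B) : 0 < t β := by linarith [ht1 β]
  have hlaw (α β : B) := HasLaw.of_map_eq (hdist α β)
  have hvar (α β : B) : Var[f α β; ℙ] = E β / t β := by
    rw [(hlaw α β).variance_eq_of_gaussianReal,
      Real.coe_toNNReal _ (div_nonneg (hE β) (ht0 β).le)]
  have hmoment (α : B) : ∫ ω, f α β' ω * f α β ω = if β' = β then E β / t β else 0 := by
    rw [integral_mul_eq_ite_variance_of_pairwise_indepFun (X := fun p : B × B => f p.1 p.2)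
      (fun p => (hlaw p.1 p.2).aemeasurable) (fun p => (hlaw p.1 p.2).integral_eq_of_gaussianReal)
      (fun p q hpq => hindep.indepFun hpq) (α, β') (α, β)]
    by_cases h : β' = β <;> simp [h, hvar]
  have hint (α : B) : Integrable (fun ω => f α β' ω * f α β ω) :=
    ((hlaw α β').memLp_of_gaussianReal (p := 2) (by simp)).integrable_mul
      ((hlaw α β).memLp_of_gaussianReal (p := 2) (by simp))
  rw [integral_Wmat_transpose_mul_apply T f hint]
  simp_rw [hmoment]
  rcases eq_or_ne β' β with rfl | hne
  · have hidem (α : B) : T α β' * T α β' = T α β' := by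
      rcases hT01 α β' with h | h <;> simp [h]
    simp only [if_true, hidem, ← Finset.sum_mul, ← ht, diagonal_apply_eq]
    field_simp [(ht0 β').ne']
  · simp [hne]

/-- In the sparse altered Hamiltonian setup (entries of `W` are
`T_{α,β} f_{α,β}` with the `f_{α,β}` jointly independent centered Gaussians of
variance `E_β / t_β`), the expectation of `WᵀW` is `H = diagonal E`: entrywise,
`E_ω[(WᵀW)_{β',β}] = E_β` if `β' = β` and `0` otherwise. -/
theorem expectation_WtW_eq_diagonal
    {B : Type*} [Fintype B] [DecidableEq B]
    (E : B → ℝ) (hE : ∀ β, 0 ≤ E β)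
    (T : B → B → ℝ) (hT01 : ∀ α β, T α β = 0 ∨ T α β = 1)
    (t : B → ℝ) (ht : ∀ β, t β = ∑ α, T α β) (ht1 : ∀ β, 1 ≤ t β)
    {Ω : Type*} [MeasureSpace Ω] [IsProbabilityMeasure (ℙ : Measure Ω)]
    (f : B → B → Ω → ℝ)
    (hmeas : ∀ α β, Measurable (f α β))
    (hindep : iIndepFun
      (fun p : B × B => f p.1 p.2) ℙ)
    (hdist : ∀ α β, Measure.map (f α β) ℙ = gaussianReal 0 (Real.toNNReal (E β / t β))) :
    ∀ β' β, (∫ ω, ((Wmat T f ω)ᵀ * Wmat T f ω) β' β ∂ℙ) = Matrix.diagonal E β' β :=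
  expectation_WtW_eq_diagonal_general E hE T hT01 t ht ht1 f hindep hdist
end

section
/- Variational energy decrease with optimal sign choices: let H and P_1,…,P_m be Hermitian N×N complex matrices and ψ ∈ ℂ^N a unit vector. For each i, set c_i := ⟨ψ, i(P_iH − HP_i) ψ⟩ (a real number), choose μ_i ∈ {−1, +1} with μ_i c_i = |c_i|, and let G := Σ_{i=1}^m μ_i P_i. Then for every θ ≥ 0, ⟨ψ, exp(−iθG) H exp(iθG) ψ⟩ ≤ ⟨ψ, H ψ⟩ − θ · Σ_{i=1}^m |c_i| + 2 θ² ‖G‖² ‖H‖. -/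
/-!
Put `A = i G`, which is skew-adjoint because `G` is Hermitian, so `exp (t A)` is unitary. The
energy `f t = Re ⟨ψ, exp (-t A) H exp (t A) ψ⟩` has derivatives
`f' t = Re ⟨ψ, exp (-t A) ⁅H, A⁆ exp (t A) ψ⟩` and
`f'' t = Re ⟨ψ, exp (-t A) ⁅⁅H, A⁆, A⁆ exp (t A) ψ⟩`; by unitarity
`f'' ≤ ‖⁅⁅H, A⁆, A⁆‖ ≤ 4 ‖G‖² ‖H‖`, so a second-order Taylor bound applies. The sign choice makes
`f' 0 = -∑ μᵢ cᵢ = -∑ |cᵢ|`.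
-/

open Matrix
open scoped Matrix.Norms.L2Operator ComplexConjugate

/-- The quadratic form `⟨ψ, M ψ⟩ = Σ_j conj(ψ_j) (M ψ)_j`. -/
noncomputable def quadForm {N : ℕ} (M : Matrix (Fin N) (Fin N) ℂ) (ψ : Fin N → ℂ) : ℂ :=
  ∑ j, conj (ψ j) * (M *ᵥ ψ) j

theorem le_add_mul_add_sq_of_hasDerivAt {f g g' : ℝ → ℝ} {M θ : ℝ}
    (hf : ∀ t, HasDerivAt f (g t) t) (hg : ∀ t, HasDerivAt g (g' t) t) (hg' : ∀ t, g' t ≤ M)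
    (hθ : 0 ≤ θ) : f θ ≤ f 0 + θ * g 0 + M * θ ^ 2 / 2 := by
  have hg_le : ∀ t ∈ Set.Icc 0 θ, g t ≤ g 0 + M * t := by
    refine image_le_of_deriv_right_le_deriv_boundary (f' := g') (B := fun t => g 0 + M * t)
      (B' := fun _ => M) (fun t _ => (hg t).continuousAt.continuousWithinAt)
      (fun t _ => (hg t).hasDerivWithinAt) (by simp) (by fun_prop) (fun t _ => ?_)
      (fun t _ => hg' t)
    simpa using (((hasDerivAt_id t).const_mul M).const_add (g 0)).hasDerivWithinAt
  refine image_le_of_deriv_right_le_deriv_boundary (f' := g)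
    (B := fun t => f 0 + t * g 0 + M * t ^ 2 / 2) (B' := fun t => g 0 + M * t)
    (fun t _ => (hf t).continuousAt.continuousWithinAt) (fun t _ => (hf t).hasDerivWithinAt)
    (by simp) (by fun_prop) (fun t _ => ?_) (fun t ht => hg_le t (Set.Ico_subset_Icc_self ht))
    ⟨hθ, le_rfl⟩
  have hB : HasDerivAt (fun t => f 0 + t * g 0 + M * t ^ 2 / 2) (g 0 + M * t) t :=
    ((((hasDerivAt_id t).mul_const (g 0)).const_add (f 0)).add
      (((hasDerivAt_pow 2 t).const_mul M).div_const 2)).congr_deriv (by simp; ring)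
  exact hB.hasDerivWithinAt

theorem norm_lie_le {R : Type*} [NormedRing R] (x y : R) : ‖⁅x, y⁆‖ ≤ 2 * ‖x‖ * ‖y‖ := by
  rw [Ring.lie_def]
  calc ‖x * y - y * x‖ ≤ ‖x‖ * ‖y‖ + ‖y‖ * ‖x‖ :=
        (norm_sub_le _ _).trans (add_le_add (norm_mul_le _ _) (norm_mul_le _ _))
    _ = 2 * ‖x‖ * ‖y‖ := by ring

section ExpConjugation

open NormedSpace

variable {𝔸 : Type*} [NormedRing 𝔸] [NormedAlgebra ℝ 𝔸] [CompleteSpace 𝔸]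

theorem hasDerivAt_exp_neg_smul_mul_mul_exp_smul (a m : 𝔸) (t : ℝ) :
    HasDerivAt (fun s : ℝ => exp (-(s • a)) * m * exp (s • a))
      (exp (-(t • a)) * ⁅m, a⁆ * exp (t • a)) t := by
  have hneg := hasDerivAt_exp_smul_const (-a) t
  simp only [smul_neg] at hneg
  refine ((hneg.mul_const m).mul (hasDerivAt_exp_smul_const a t)).congr_deriv ?_
  have hcomm : a * exp (t • a) = exp (t • a) * a :=
    ((Commute.refl a).smul_right t).exp_right
  rw [Ring.lie_def, mul_sub, sub_mul, mul_assoc _ (a * m), mul_assoc a, ← hcomm]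
  noncomm_ring

variable [StarRing 𝔸] [CStarRing 𝔸]

theorem norm_exp_neg_mul_mul_exp_of_mem_skewAdjoint {a : 𝔸} (ha : a ∈ skewAdjoint 𝔸) (d : 𝔸) :
    ‖exp (-a) * d * exp a‖ = ‖d‖ := by
  -- `exp_mem_unitary_of_mem_skewAdjoint` is stated for `ℚ`-algebras.
  let +nondep : NormedAlgebra ℚ 𝔸 := .restrictScalars ℚ ℝ 𝔸
  rw [CStarRing.norm_mul_mem_unitary _ (exp_mem_unitary_of_mem_skewAdjoint ha),
    CStarRing.norm_mem_unitary_mul _ (exp_mem_unitary_of_mem_skewAdjoint (neg_mem ha))]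

theorem map_exp_neg_smul_mul_mul_exp_smul_le [StarModule ℝ 𝔸] (φ : 𝔸 →L[ℝ] ℝ)
    (hφ : ∀ x, φ x ≤ ‖x‖) {a : 𝔸} (ha : a ∈ skewAdjoint 𝔸) (m : 𝔸) {θ : ℝ} (hθ : 0 ≤ θ) :
    φ (exp (-(θ • a)) * m * exp (θ • a)) ≤ φ m + θ * φ ⁅m, a⁆ + ‖⁅⁅m, a⁆, a⁆‖ * θ ^ 2 / 2 := by
  have hderiv (x : 𝔸) (t : ℝ) : HasDerivAt (fun s : ℝ => φ (exp (-(s • a)) * x * exp (s • a)))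
      (φ (exp (-(t • a)) * ⁅x, a⁆ * exp (t • a))) t :=
    φ.hasFDerivAt.comp_hasDerivAt t (hasDerivAt_exp_neg_smul_mul_mul_exp_smul a x t)
  have hbound (t : ℝ) : φ (exp (-(t • a)) * ⁅⁅m, a⁆, a⁆ * exp (t • a)) ≤ ‖⁅⁅m, a⁆, a⁆‖ :=
    (hφ _).trans_eq (norm_exp_neg_mul_mul_exp_of_mem_skewAdjoint (skewAdjoint.smul_mem t ha) _)
  simpa using le_add_mul_add_sq_of_hasDerivAt (hderiv m) (hderiv ⁅m, a⁆) hbound hθ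

end ExpConjugation

section QuadForm

variable {N : ℕ}

noncomputable def quadFormCLM (ψ : Fin N → ℂ) : Matrix (Fin N) (Fin N) ℂ →L[ℂ] ℂ :=
  LinearMap.toContinuousLinearMap
    { toFun := fun M => quadForm M ψ
      map_add' := fun M₁ M₂ => by
        simp [quadForm, Matrix.add_mulVec, mul_add, Finset.sum_add_distrib]
      map_smul' := fun z M => by
        simp [quadForm, Matrix.smul_mulVec, Finset.mul_sum, mul_left_comm] }

@[simp]
theorem quadFormCLM_apply (ψ : Fin N → ℂ) (M : Matrix (Fin N) (Fin N) ℂ) :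
    quadFormCLM ψ M = quadForm M ψ :=
  rfl

theorem quadForm_eq_inner (M : Matrix (Fin N) (Fin N) ℂ) (ψ : Fin N → ℂ) :
    quadForm M ψ = inner ℂ (WithLp.toLp 2 ψ) (WithLp.toLp 2 (M *ᵥ ψ)) := by
  simp [quadForm, PiLp.inner_apply, mul_comm]

theorem norm_quadForm_le (M : Matrix (Fin N) (Fin N) ℂ) {ψ : Fin N → ℂ}
    (hψ : ∑ j, ‖ψ j‖ ^ 2 = 1) : ‖quadForm M ψ‖ ≤ ‖M‖ := by
  have hunit : ‖WithLp.toLp 2 ψ‖ = 1 := by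
    simp [EuclideanSpace.norm_eq, hψ]
  calc ‖quadForm M ψ‖ ≤ ‖WithLp.toLp 2 ψ‖ * ‖WithLp.toLp 2 (M *ᵥ ψ)‖ := by
        rw [quadForm_eq_inner]; exact norm_inner_le_norm _ _
    _ ≤ ‖WithLp.toLp 2 ψ‖ * (‖M‖ * ‖WithLp.toLp 2 ψ‖) := by
        gcongr; exact M.l2_opNorm_mulVec (WithLp.toLp 2 ψ)
    _ = ‖M‖ := by rw [hunit, one_mul, mul_one]

theorem quadForm_lie_I_smul_sum {m : ℕ} (H : Matrix (Fin N) (Fin N) ℂ)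
    (P : Fin m → Matrix (Fin N) (Fin N) ℂ) (μ : Fin m → ℂ) (ψ : Fin N → ℂ) :
    quadForm ⁅H, Complex.I • ∑ i, μ i • P i⁆ ψ =
      -∑ i, μ i * quadForm (Complex.I • (P i * H - H * P i)) ψ := by
  have hlie : ⁅H, Complex.I • ∑ i, μ i • P i⁆ =
      ∑ i, μ i • -(Complex.I • (P i * H - H * P i)) := by
    simp only [Ring.lie_def, Finset.smul_sum, Finset.mul_sum, Finset.sum_mul,
      ← Finset.sum_sub_distrib]
    refine Finset.sum_congr rfl fun i _ => ?_
    rw [mul_smul_comm, mul_smul_comm, smul_mul_assoc, smul_mul_assoc]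
    module
  rw [← quadFormCLM_apply, hlie, map_sum, ← Finset.sum_neg_distrib]
  refine Finset.sum_congr rfl fun i _ => ?_
  rw [map_smul, map_neg, smul_eq_mul, quadFormCLM_apply, mul_neg]

end QuadForm

theorem variational_energy_decrease_general
    {N m : ℕ} (H : Matrix (Fin N) (Fin N) ℂ)
    (P : Fin m → Matrix (Fin N) (Fin N) ℂ) (hP : ∀ i, (P i).IsHermitian)
    (ψ : Fin N → ℂ) (hψ : ∑ j, ‖ψ j‖ ^ 2 = 1)
    (c : Fin m → ℝ)
    (hc : ∀ i, (c i : ℂ) = quadForm (Complex.I • (P i * H - H * P i)) ψ)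
    (μ : Fin m → ℝ)
    (hμc : ∀ i, μ i * c i = |c i|)
    (G : Matrix (Fin N) (Fin N) ℂ) (hG : G = ∑ i, ((μ i : ℝ) : ℂ) • P i)
    (θ : ℝ) (hθ : 0 ≤ θ) :
    (quadForm
        (NormedSpace.exp ((-(Complex.I * (θ : ℂ))) • G) * H *
          NormedSpace.exp ((Complex.I * (θ : ℂ)) • G)) ψ).re ≤
      (quadForm H ψ).re - θ * (∑ i, |c i|) + 2 * θ ^ 2 * ‖G‖ ^ 2 * ‖H‖ := by
  set A := Complex.I • G with hA
  have hG_selfAdjoint : IsSelfAdjoint G := by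
    rw [hG]
    exact isSelfAdjoint_sum _ fun i _ =>
      IsSelfAdjoint.smul (Complex.conj_ofReal (μ i)) (hP i).isSelfAdjoint
  have hA_skew : A ∈ skewAdjoint _ :=
    hG_selfAdjoint.smul_mem_skewAdjoint Complex.I_mem_skewAdjoint
  let φ : Matrix (Fin N) (Fin N) ℂ →L[ℝ] ℝ :=
    Complex.reCLM.comp ((quadFormCLM ψ).restrictScalars ℝ)
  have hφ (X : Matrix (Fin N) (Fin N) ℂ) : φ X ≤ ‖X‖ :=
    (Complex.re_le_norm _).trans (norm_quadForm_le X hψ)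
  have hfirst : φ ⁅H, A⁆ = -∑ i, |c i| := by
    change (quadForm ⁅H, A⁆ ψ).re = _
    simp only [hA, hG, quadForm_lie_I_smul_sum, ← hc, ← Complex.ofReal_mul,
      ← Complex.ofReal_sum, ← Complex.ofReal_neg, Complex.ofReal_re, hμc]
  have hsecond : ‖⁅⁅H, A⁆, A⁆‖ ≤ 4 * ‖G‖ ^ 2 * ‖H‖ := by
    have hAG : ‖A‖ = ‖G‖ := by rw [hA, norm_smul, Complex.norm_I, one_mul]
    calc ‖⁅⁅H, A⁆, A⁆‖ ≤ 2 * (2 * ‖H‖ * ‖A‖) * ‖A‖ := by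
          grw [norm_lie_le, norm_lie_le]
      _ = 4 * ‖G‖ ^ 2 * ‖H‖ := by rw [hAG]; ring
  have hθA : (Complex.I * θ) • G = θ • A := by
    rw [hA, ← Complex.coe_smul, smul_smul, mul_comm]
  rw [neg_smul, hθA]
  calc _ = φ (NormedSpace.exp (-(θ • A)) * H * NormedSpace.exp (θ • A)) := rfl
    _ ≤ φ H + θ * φ ⁅H, A⁆ + ‖⁅⁅H, A⁆, A⁆‖ * θ ^ 2 / 2 :=
        map_exp_neg_smul_mul_mul_exp_smul_le φ hφ hA_skew H hθ
    _ ≤ _ := by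
        rw [hfirst]
        have hφH : φ H = (quadForm H ψ).re := rfl
        have := mul_le_mul_of_nonneg_right hsecond (sq_nonneg θ)
        linarith

/-- Variational energy decrease with optimal sign choices: with Hermitian `H, P_i`,
a unit vector `ψ`, `c_i = ⟨ψ, i(P_iH − HP_i)ψ⟩`, signs `μ_i ∈ {±1}` with
`μ_i c_i = |c_i|`, and `G = Σ_i μ_i P_i`, for every `θ ≥ 0`,
`⟨ψ, e^{−iθG} H e^{iθG} ψ⟩ ≤ ⟨ψ, H ψ⟩ − θ Σ_i |c_i| + 2 θ² ‖G‖² ‖H‖`. -/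
theorem variational_energy_decrease
    {N m : ℕ} (H : Matrix (Fin N) (Fin N) ℂ) (hH : H.IsHermitian)
    (P : Fin m → Matrix (Fin N) (Fin N) ℂ) (hP : ∀ i, (P i).IsHermitian)
    (ψ : Fin N → ℂ) (hψ : ∑ j, ‖ψ j‖ ^ 2 = 1)
    (c : Fin m → ℝ)
    (hc : ∀ i, (c i : ℂ) = quadForm (Complex.I • (P i * H - H * P i)) ψ)
    (μ : Fin m → ℝ) (hμ : ∀ i, μ i = 1 ∨ μ i = -1)
    (hμc : ∀ i, μ i * c i = |c i|)
    (G : Matrix (Fin N) (Fin N) ℂ) (hG : G = ∑ i, ((μ i : ℝ) : ℂ) • P i)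
    (θ : ℝ) (hθ : 0 ≤ θ) :
    (quadForm
        (NormedSpace.exp ((-(Complex.I * (θ : ℂ))) • G) * H *
          NormedSpace.exp ((Complex.I * (θ : ℂ)) • G)) ψ).re ≤
      (quadForm H ψ).re - θ * (∑ i, |c i|) + 2 * θ ^ 2 * ‖G‖ ^ 2 * ‖H‖ :=
  variational_energy_decrease_general H P hP ψ hψ c hc μ hμc G hG θ hθ
end
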